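/- (Sufficiency of the geometric optimality conditions, Eq. (10).) Let {(q_i, ρ_i)}_{i=1}^N be an ensemble of qubit states with Bloch vectors v_i and q_1 = max_i q_i. Suppose there exist reals p_i > 0, r_i > 0 and unit vectors u_i ∈ ℝ³ (i = 1,…,N) such that ∑_i p_i = 1, ∑_i p_i u_i = 0, r_i − r_1 = q_1 − q_i for all i, and r_i u_i − r_1 u_1 = q_i v_i − q_1 v_1 for all i. Then the POVM M_i = p_i(I + u_i·σ) is optimal and p_guess = q_1 + r_1 > q_1. -/

import Mathlib

/-! The POVM `Mᵢ = pᵢ (I + uᵢ·σ)` attains `q₁ + r₁`, and `Y = ½ ((q₁ + r₁) I + (q₁v₁ - r₁u₁)·σ)`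
is a dual certificate: the geometric conditions give `Y - qᵢρᵢ = (rᵢ/2) (I - uᵢ·σ) ⪰ 0`, so for
every POVM `B` we get `∑ qᵢ tr(ρᵢBᵢ) ≤ ∑ tr(Y Bᵢ) = tr Y = q₁ + r₁`. Positivity of `a I + w·σ`
for `‖w‖ ≤ a` rests on `(w·σ)² = ‖w‖² I`. -/

open Matrix
open scoped ComplexOrder

noncomputable section

/-- The Pauli matrix σ_X. -/
def sigmaX : Matrix (Fin 2) (Fin 2) ℂ := !![0, 1; 1, 0]

/-- The Pauli matrix σ_Y. -/
def sigmaY : Matrix (Fin 2) (Fin 2) ℂ := !![0, -Complex.I; Complex.I, 0]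

/-- The Pauli matrix σ_Z. -/
def sigmaZ : Matrix (Fin 2) (Fin 2) ℂ := !![1, 0; 0, -1]

/-- `v · σ = v₁ σ_X + v₂ σ_Y + v₃ σ_Z` for a vector `v ∈ ℝ³`. -/
def pauliDot (v : EuclideanSpace ℝ (Fin 3)) : Matrix (Fin 2) (Fin 2) ℂ :=
  (v 0 : ℂ) • sigmaX + (v 1 : ℂ) • sigmaY + (v 2 : ℂ) • sigmaZ

/-- A qubit state: a 2×2 complex positive semidefinite matrix with trace 1. -/
def IsQubitState (ρ : Matrix (Fin 2) (Fin 2) ℂ) : Prop :=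
  ρ.PosSemidef ∧ ρ.trace = 1

/-- An `N`-outcome POVM: positive semidefinite matrices summing to the identity. -/
def IsPOVM {N : ℕ} (M : Fin N → Matrix (Fin 2) (Fin 2) ℂ) : Prop :=
  (∀ i, (M i).PosSemidef) ∧ ∑ i, M i = 1

/-- The guessing probability of the ensemble `{(q i, ρ i)}`:
the supremum over all `N`-outcome POVMs of `∑ i, q i · Re (tr (ρ i * M i))`. -/
def pGuess {N : ℕ} (q : Fin N → ℝ) (ρ : Fin N → Matrix (Fin 2) (Fin 2) ℂ) : ℝ :=
  sSup {x : ℝ | ∃ M : Fin N → Matrix (Fin 2) (Fin 2) ℂ,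
    IsPOVM M ∧ x = ∑ i, q i * ((ρ i * M i).trace).re}

/-- A POVM is optimal when it attains the guessing probability. -/
def IsOptimalPOVM {N : ℕ} (q : Fin N → ℝ) (ρ M : Fin N → Matrix (Fin 2) (Fin 2) ℂ) : Prop :=
  IsPOVM M ∧ ∑ i, q i * ((ρ i * M i).trace).re = pGuess q ρ

open scoped InnerProductSpace

section Pauli

variable (w z : EuclideanSpace ℝ (Fin 3))

lemma real_inner_fin_three : ⟪w, z⟫_ℝ = w 0 * z 0 + w 1 * z 1 + w 2 * z 2 := by
  simp only [PiLp.inner_apply, Fin.sum_univ_three, RCLike.inner_apply, conj_trivial]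
  ring

lemma pauliDot_eq_of :
    pauliDot w = !![(w 2 : ℂ), w 0 - w 1 * Complex.I; w 0 + w 1 * Complex.I, -(w 2 : ℂ)] := by
  ext i j
  fin_cases i <;> fin_cases j <;> simp [pauliDot, sigmaX, sigmaY, sigmaZ, sub_eq_add_neg, mul_comm]

lemma pauliDot_add : pauliDot (w + z) = pauliDot w + pauliDot z := by
  simp only [pauliDot, PiLp.add_apply, Complex.ofReal_add, add_smul]
  abel

lemma pauliDot_smul (c : ℝ) : pauliDot (c • w) = c • pauliDot w := by
  simp only [pauliDot, PiLp.smul_apply, smul_eq_mul, Complex.ofReal_mul, mul_smul, smul_add,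
    Complex.coe_smul]

def pauliDotLinearMap : EuclideanSpace ℝ (Fin 3) →ₗ[ℝ] Matrix (Fin 2) (Fin 2) ℂ where
  toFun := pauliDot
  map_add' := pauliDot_add
  map_smul' c w := pauliDot_smul w c

lemma pauliDot_zero : pauliDot 0 = 0 :=
  map_zero pauliDotLinearMap

lemma pauliDot_sub : pauliDot (w - z) = pauliDot w - pauliDot z :=
  map_sub pauliDotLinearMap w z

lemma pauliDot_sum {ι : Type*} (s : Finset ι) (f : ι → EuclideanSpace ℝ (Fin 3)) :
    pauliDot (∑ i ∈ s, f i) = ∑ i ∈ s, pauliDot (f i) :=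
  map_sum pauliDotLinearMap f s

lemma pauliDot_isHermitian : (pauliDot w).IsHermitian := by
  rw [pauliDot_eq_of]
  ext i j
  fin_cases i <;> fin_cases j <;> simp [Complex.ext_iff]

lemma trace_pauliDot : (pauliDot w).trace = 0 := by
  simp [pauliDot_eq_of, trace_fin_two]

lemma trace_pauliDot_mul_pauliDot : (pauliDot w * pauliDot z).trace = 2 * (⟪w, z⟫_ℝ : ℂ) := by
  rw [pauliDot_eq_of, pauliDot_eq_of, mul_fin_two, trace_fin_two_of, real_inner_fin_three]
  push_cast
  linear_combination (-2 * (w 1 : ℂ) * z 1) * Complex.I_mul_I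

lemma pauliDot_mul_self : pauliDot w * pauliDot w = ‖w‖ ^ 2 • 1 := by
  rw [← real_inner_self_eq_norm_sq, real_inner_fin_three, pauliDot_eq_of, mul_fin_two]
  ext i j
  fin_cases i <;> fin_cases j <;> simp [one_apply] <;> ring_nf <;> simp [Complex.I_sq]

end Pauli

lemma posSemidef_norm_smul_one_add_pauliDot (w : EuclideanSpace ℝ (Fin 3)) :
    (‖w‖ • 1 + pauliDot w).PosSemidef := by
  set A : Matrix (Fin 2) (Fin 2) ℂ := ‖w‖ • 1 + pauliDot w
  rcases (norm_nonneg w).eq_or_lt with hw | hw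
  · have hw0 : w = 0 := norm_eq_zero.mp hw.symm
    simpa [A, hw0, pauliDot_zero] using PosSemidef.zero
  · have hA : A.IsHermitian :=
      (isHermitian_one.smul (IsSelfAdjoint.all ‖w‖)).add (pauliDot_isHermitian w)
    have hAA : Aᴴ * A = (2 * ‖w‖) • A := by
      rw [hA.eq]
      simp only [A, add_mul, mul_add, pauliDot_mul_self, smul_mul, mul_smul_comm, mul_one,
        one_mul]
      module
    have : A = (2 * ‖w‖)⁻¹ • (Aᴴ * A) := by
      rw [hAA, smul_smul, inv_mul_cancel₀ (by positivity), one_smul]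
    rw [this]
    exact (posSemidef_conjTranspose_mul_self A).smul (by positivity)

def blochMatrix (a : ℝ) (w : EuclideanSpace ℝ (Fin 3)) : Matrix (Fin 2) (Fin 2) ℂ :=
  a • 1 + pauliDot w

section blochMatrix

variable (a b : ℝ) (w z : EuclideanSpace ℝ (Fin 3))

lemma ofReal_smul_one_add_pauliDot : (a : ℂ) • (1 + pauliDot w) = blochMatrix a (a • w) := by
  rw [Complex.coe_smul, blochMatrix, pauliDot_smul, smul_add]

lemma smul_blochMatrix (c : ℝ) : c • blochMatrix a w = blochMatrix (c * a) (c • w) := by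
  rw [blochMatrix, blochMatrix, pauliDot_smul, smul_add, smul_smul]

lemma blochMatrix_sub : blochMatrix a w - blochMatrix b z = blochMatrix (a - b) (w - z) := by
  rw [blochMatrix, blochMatrix, blochMatrix, pauliDot_sub, sub_smul]
  abel

lemma sum_blochMatrix {ι : Type*} (s : Finset ι) (c : ι → ℝ)
    (f : ι → EuclideanSpace ℝ (Fin 3)) :
    ∑ i ∈ s, blochMatrix (c i) (f i) = blochMatrix (∑ i ∈ s, c i) (∑ i ∈ s, f i) := by
  simp only [blochMatrix, Finset.sum_add_distrib, Finset.sum_smul, pauliDot_sum]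

lemma blochMatrix_one_zero : blochMatrix 1 0 = 1 := by
  rw [blochMatrix, pauliDot_zero, one_smul, add_zero]

lemma re_trace_blochMatrix : (blochMatrix a w).trace.re = 2 * a := by
  simp [blochMatrix, trace_pauliDot, mul_comm]

lemma re_trace_blochMatrix_mul :
    (blochMatrix a w * blochMatrix b z).trace.re = 2 * (a * b + ⟪w, z⟫_ℝ) := by
  have : (blochMatrix a w * blochMatrix b z).trace = (2 * (a * b + ⟪w, z⟫_ℝ) : ℝ) := by
    simp only [blochMatrix, add_mul, mul_add, smul_mul, mul_smul_comm, one_mul, mul_one,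
      trace_add, trace_smul, trace_one, trace_pauliDot, trace_pauliDot_mul_pauliDot,
      Fintype.card_fin, smul_zero, Complex.real_smul]
    push_cast
    ring
  rw [this, Complex.ofReal_re]

variable {a w}

lemma posSemidef_blochMatrix (h : ‖w‖ ≤ a) : (blochMatrix a w).PosSemidef := by
  have : blochMatrix a w = (a - ‖w‖) • 1 + (‖w‖ • 1 + pauliDot w) := by
    rw [blochMatrix, sub_smul]
    abel
  rw [this]
  exact (PosSemidef.one.smul (sub_nonneg.2 h)).add (posSemidef_norm_smul_one_add_pauliDot w)

end blochMatrix

open scoped MatrixOrder in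
lemma Matrix.PosSemidef.trace_mul_nonneg {n 𝕜 : Type*} [Fintype n] [DecidableEq n] [RCLike 𝕜]
    {A B : Matrix n n 𝕜} (hA : A.PosSemidef) (hB : B.PosSemidef) : 0 ≤ (A * B).trace := by
  set S := CFC.sqrt A
  have hS : Sᴴ = S := (CFC.sqrt_nonneg A).isSelfAdjoint
  calc 0 ≤ (S * B * Sᴴ).trace := (hB.mul_mul_conjTranspose_same S).trace_nonneg
    _ = (A * B).trace := by
      rw [hS, trace_mul_cycle, ← CFC.sqrt_mul_sqrt_self A hA.nonneg]

section Duality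

variable {N : ℕ} {q : Fin N → ℝ} {ρ : Fin N → Matrix (Fin 2) (Fin 2) ℂ}
  {Y : Matrix (Fin 2) (Fin 2) ℂ}

lemma sum_re_trace_le_of_posSemidef_sub (hY : ∀ i, (Y - q i • ρ i).PosSemidef)
    {B : Fin N → Matrix (Fin 2) (Fin 2) ℂ} (hB : IsPOVM B) :
    ∑ i, q i * (ρ i * B i).trace.re ≤ Y.trace.re :=
  calc ∑ i, q i * (ρ i * B i).trace.re ≤ ∑ i, (Y * B i).trace.re := by
        gcongr with i
        have := (Complex.nonneg_iff.mp ((hY i).trace_mul_nonneg (hB.1 i))).1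
        simpa [sub_mul, trace_sub, smul_mul_assoc, trace_smul] using this
    _ = Y.trace.re := by rw [← Complex.re_sum, ← trace_sum, ← Finset.mul_sum, hB.2, mul_one]

lemma pGuess_eq_of_posSemidef_sub {M : Fin N → Matrix (Fin 2) (Fin 2) ℂ} (hM : IsPOVM M)
    (hY : ∀ i, (Y - q i • ρ i).PosSemidef)
    (hMY : ∑ i, q i * (ρ i * M i).trace.re = Y.trace.re) :
    pGuess q ρ = Y.trace.re :=
  IsGreatest.csSup_eq ⟨⟨M, hM, hMY.symm⟩, by
    rintro _ ⟨B, hB, rfl⟩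
    exact sum_re_trace_le_of_posSemidef_sub hY hB⟩

end Duality

lemma inv_two_smul_one_add_pauliDot (w : EuclideanSpace ℝ (Fin 3)) :
    (2⁻¹ : ℂ) • (1 + pauliDot w) = blochMatrix 2⁻¹ ((2⁻¹ : ℝ) • w) := by
  rw [← ofReal_smul_one_add_pauliDot]
  push_cast
  rfl

section Geometric

variable {N : ℕ} {q p r : Fin N → ℝ} {v u : Fin N → EuclideanSpace ℝ (Fin 3)}
  {ρ : Fin N → Matrix (Fin 2) (Fin 2) ℂ}

lemma isPOVM_ofReal_smul_one_add_pauliDot (hp : ∀ i, 0 ≤ p i) (hu : ∀ i, ‖u i‖ ≤ 1)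
    (hpsum : ∑ i, p i = 1) (hpu : ∑ i, p i • u i = 0) :
    IsPOVM fun i => (p i : ℂ) • (1 + pauliDot (u i)) := by
  simp only [ofReal_smul_one_add_pauliDot]
  refine ⟨fun i => posSemidef_blochMatrix ?_, ?_⟩
  · rw [norm_smul, Real.norm_of_nonneg (hp i)]
    exact mul_le_of_le_one_right (hp i) (hu i)
  · rw [sum_blochMatrix, hpsum, hpu, blochMatrix_one_zero]

lemma sum_re_trace_eq_of_geometric (j : Fin N)
    (hρ : ∀ i, ρ i = (2⁻¹ : ℂ) • (1 + pauliDot (v i))) (hunit : ∀ i, ‖u i‖ = 1)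
    (hpsum : ∑ i, p i = 1) (hpu : ∑ i, p i • u i = 0) (hre : ∀ i, r i - r j = q j - q i)
    (hru : ∀ i, r i • u i - r j • u j = q i • v i - q j • v j) :
    ∑ i, q i * (ρ i * (p i : ℂ) • (1 + pauliDot (u i))).trace.re = q j + r j := by
  set c := q j • v j - r j • u j
  have hterm : ∀ i, q i * (ρ i * (p i : ℂ) • (1 + pauliDot (u i))).trace.re
      = p i * (q j + r j) + ⟪c, p i • u i⟫_ℝ := by
    intro i
    have hqv : q i • v i = r i • u i + c := by
      linear_combination (norm := module) -(hru i)
    have hinner : q i * ⟪v i, u i⟫_ℝ = r i + ⟪c, u i⟫_ℝ := by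
      rw [← real_inner_smul_left, hqv, inner_add_left, real_inner_smul_left,
        real_inner_self_eq_norm_sq, hunit, one_pow, mul_one]
    rw [hρ, inv_two_smul_one_add_pauliDot, ofReal_smul_one_add_pauliDot, re_trace_blochMatrix_mul]
    simp only [real_inner_smul_left, real_inner_smul_right]
    linear_combination (p i) * hinner + (p i) * hre i
  rw [Finset.sum_congr rfl fun i _ => hterm i, Finset.sum_add_distrib, ← Finset.sum_mul,
    ← inner_sum, hpsum, hpu, inner_zero_right]
  ring

lemma posSemidef_sub_of_geometric (j : Fin N)
    (hρ : ∀ i, ρ i = (2⁻¹ : ℂ) • (1 + pauliDot (v i))) (hr : ∀ i, 0 ≤ r i)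
    (hu : ∀ i, ‖u i‖ ≤ 1) (hre : ∀ i, r i - r j = q j - q i)
    (hru : ∀ i, r i • u i - r j • u j = q i • v i - q j • v j) (i : Fin N) :
    (blochMatrix ((q j + r j) / 2) ((2⁻¹ : ℝ) • (q j • v j - r j • u j)) -
      q i • ρ i).PosSemidef := by
  rw [hρ, inv_two_smul_one_add_pauliDot, smul_blochMatrix, blochMatrix_sub]
  have hvec : (2⁻¹ : ℝ) • (q j • v j - r j • u j) - q i • (2⁻¹ : ℝ) • v i = -(r i / 2) • u i := by
    linear_combination (norm := module) (2⁻¹ : ℝ) • hru i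
  rw [hvec, show (q j + r j) / 2 - q i * 2⁻¹ = r i / 2 by linarith [hre i]]
  refine posSemidef_blochMatrix ?_
  rw [norm_smul, norm_neg, Real.norm_of_nonneg (by linarith [hr i])]
  exact mul_le_of_le_one_right (by linarith [hr i]) (hu i)

end Geometric

/-- Index `0` plays the role of the paper's index `1`. -/
theorem geometric_conditions_sufficient_general {N : ℕ} [NeZero N]
    (q : Fin N → ℝ) (v : Fin N → EuclideanSpace ℝ (Fin 3))
    (ρ : Fin N → Matrix (Fin 2) (Fin 2) ℂ)
    (hρ : ∀ i, ρ i = (2⁻¹ : ℂ) • (1 + pauliDot (v i)))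
    (p r : Fin N → ℝ) (u : Fin N → EuclideanSpace ℝ (Fin 3))
    (hp : ∀ i, 0 < p i) (hr : ∀ i, 0 < r i) (hunit : ∀ i, ‖u i‖ = 1)
    (hpsum : ∑ i, p i = 1) (hpu : ∑ i, p i • u i = 0)
    (hre : ∀ i, r i - r 0 = q 0 - q i)
    (hru : ∀ i, r i • u i - r 0 • u 0 = q i • v i - q 0 • v 0) :
    IsOptimalPOVM q ρ (fun i => (p i : ℂ) • (1 + pauliDot (u i))) ∧
      pGuess q ρ = q 0 + r 0 ∧ q 0 < pGuess q ρ := by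
  have hM := isPOVM_ofReal_smul_one_add_pauliDot (fun i => (hp i).le) (fun i => (hunit i).le)
    hpsum hpu
  have hval := sum_re_trace_eq_of_geometric 0 hρ hunit hpsum hpu hre hru
  set Y := blochMatrix ((q 0 + r 0) / 2) ((2⁻¹ : ℝ) • (q 0 • v 0 - r 0 • u 0))
  have hY : ∀ i, (Y - q i • ρ i).PosSemidef :=
    posSemidef_sub_of_geometric 0 hρ (fun i => (hr i).le) (fun i => (hunit i).le) hre hru
  have hYtrace : Y.trace.re = q 0 + r 0 := by
    rw [re_trace_blochMatrix]
    ring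
  have hguess : pGuess q ρ = q 0 + r 0 :=
    hYtrace ▸ pGuess_eq_of_posSemidef_sub hM hY (hval.trans hYtrace.symm)
  exact ⟨⟨hM, hval.trans hguess.symm⟩, hguess, hguess ▸ lt_add_of_pos_right _ (hr 0)⟩

/-- Sufficiency of the geometric optimality conditions (Eq. (10)).
Index `0` plays the role of index `1` in the paper, so `q 0 = max_i q i`. -/
theorem geometric_conditions_sufficient {N : ℕ} [NeZero N]
    (q : Fin N → ℝ) (v : Fin N → EuclideanSpace ℝ (Fin 3))
    (ρ : Fin N → Matrix (Fin 2) (Fin 2) ℂ)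
    (hq : ∀ i, 0 < q i) (hqsum : ∑ i, q i = 1)
    (hv : ∀ i, ‖v i‖ ≤ 1)
    (hρ : ∀ i, ρ i = (2⁻¹ : ℂ) • (1 + pauliDot (v i)))
    (hmax : ∀ i, q i ≤ q 0)
    (p r : Fin N → ℝ) (u : Fin N → EuclideanSpace ℝ (Fin 3))
    (hp : ∀ i, 0 < p i) (hr : ∀ i, 0 < r i) (hunit : ∀ i, ‖u i‖ = 1)
    (hpsum : ∑ i, p i = 1) (hpu : ∑ i, p i • u i = 0)
    (hre : ∀ i, r i - r 0 = q 0 - q i)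
    (hru : ∀ i, r i • u i - r 0 • u 0 = q i • v i - q 0 • v 0) :
    IsOptimalPOVM q ρ (fun i => (p i : ℂ) • (1 + pauliDot (u i))) ∧
      pGuess q ρ = q 0 + r 0 ∧ q 0 < pGuess q ρ :=
  geometric_conditions_sufficient_general q v ρ hρ p r u hp hr hunit hpsum hpu hre hru

end
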